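/- Let n ≥ 3 and F a family of subsets of {1,...,n} with ∅, [n] ∉ F and no four distinct members A, B, C, D with A ∪ B ⊆ C ∩ D. Then Σ_{F∈F} |F|!·(n−|F|)! ≤ 2n·(n−1)!. -/

import Mathlib

/-!
Double count pairs `(S, σ)` with `S ∈ F` and `σ` a permutation of `[n]` whose maximal chain
`∅ ⊂ {σ 0} ⊂ {σ 0, σ 1} ⊂ ⋯` passes through `S`. Since `S` lies on `|S|! (n - |S|)!` chains, the
left-hand side is the sum over all `n!` chains of the number of members of `F` on the chain, and it
suffices to show that this number is at most `2` on average.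

Call `B ∈ F` a middle if `A ⊂ B ⊂ D` for some `A, D ∈ F`. Butterfly-freeness forces a middle to
have exactly one member of `F` below it and one above it, and makes distinct middles incomparable,
so no chain passes through two middles. A chain through no middle meets `F` at most twice. The
chains through a middle `B` meet `F` only in `A`, `B`, `D`, and because `∅ ≠ A ⊂ B` and
`B ⊂ D ≠ [n]`, at most half of them pass through `A` and at most half through `D`.
-/

open Finset Equiv
open scoped Nat

theorem Finset.sum_le_mul_card_of_pairwiseDisjoint {ι γ : Type*} [DecidableEq γ]
    {s : Finset γ} {I : Finset ι} {t : ι → Finset γ} (hts : ∀ i ∈ I, t i ⊆ s)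
    (hdisj : (I : Set ι).PairwiseDisjoint t) {f : γ → ℕ} {c : ℕ}
    (hblock : ∀ i ∈ I, ∑ x ∈ t i, f x ≤ c * #(t i))
    (hrest : ∀ x ∈ s, (∀ i ∈ I, x ∉ t i) → f x ≤ c) :
    ∑ x ∈ s, f x ≤ c * #s := by
  have hU : I.biUnion t ⊆ s := biUnion_subset.2 hts
  calc ∑ x ∈ s, f x = ∑ x ∈ s \ I.biUnion t, f x + ∑ x ∈ I.biUnion t, f x :=
        (sum_sdiff hU).symm
    _ ≤ c * #(s \ I.biUnion t) + c * #(I.biUnion t) := by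
        gcongr
        · rw [mul_comm, ← smul_eq_mul]
          refine sum_le_card_nsmul _ _ _ fun x hx => ?_
          rw [mem_sdiff, mem_biUnion, not_exists] at hx
          exact hrest x hx.1 fun i hi hxi => hx.2 i ⟨hi, hxi⟩
        · rw [sum_biUnion hdisj, card_biUnion hdisj, mul_sum]
          exact sum_le_sum hblock
    _ = c * #s := by rw [← mul_add, card_sdiff_add_card_eq_card hU]

theorem Nat.two_le_choose {m k : ℕ} (hk : 0 < k) (hkm : k < m) : 2 ≤ m.choose k := by
  obtain ⟨m, rfl⟩ := Nat.exists_eq_add_one_of_ne_zero (show m ≠ 0 by omega)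
  obtain ⟨k, rfl⟩ := Nat.exists_eq_add_one_of_ne_zero (show k ≠ 0 by omega)
  rw [Nat.choose_succ_succ']
  have := Nat.choose_pos (show k ≤ m by omega)
  have := Nat.choose_pos (show k + 1 ≤ m by omega)
  omega

section PartialOrder

variable {β : Type*} [PartialOrder β]

theorem IsChain.exists_lt_lt_of_two_lt_card {t : Finset β} (ht : IsChain (· ≤ ·) (t : Set β))
    (h : 2 < #t) : ∃ a ∈ t, ∃ b ∈ t, ∃ c ∈ t, a < b ∧ b < c := by
  obtain ⟨x, hx, y, hy, z, hz, hxy, hxz, hyz⟩ := two_lt_card.1 h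
  have cmp : ∀ {u v}, u ∈ t → v ∈ t → u ≠ v → u < v ∨ v < u := fun hu hv huv =>
    (ht.total hu hv).imp (lt_of_le_of_ne · huv) (lt_of_le_of_ne · huv.symm)
  rcases cmp hx hy hxy with hxy | hyx <;> rcases cmp hx hz hxz with hxz | hzx <;>
    rcases cmp hy hz hyz with hyz | hzy
  · exact ⟨x, hx, y, hy, z, hz, hxy, hyz⟩
  · exact ⟨x, hx, z, hz, y, hy, hxz, hzy⟩
  · exact absurd (hxy.trans hyz) hzx.not_gt
  · exact ⟨z, hz, x, hx, y, hy, hzx, hxy⟩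
  · exact ⟨y, hy, x, hx, z, hz, hyx, hxz⟩
  · exact absurd (hyx.trans hxz) hzy.not_gt
  · exact ⟨y, hy, z, hz, x, hx, hyz, hzx⟩
  · exact ⟨z, hz, y, hy, x, hx, hzy, hyx⟩

def ButterflyFree (s : Set β) : Prop :=
  ∀ a ∈ s, ∀ b ∈ s, ∀ c ∈ s, ∀ d ∈ s, a ≠ b → a ≠ c → a ≠ d → b ≠ c → b ≠ d → c ≠ d →
    a ≤ c → a ≤ d → b ≤ c → b ≤ d → False

def Finset.middles [DecidableLT β] (s : Finset β) : Finset β :=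
  {b ∈ s | ∃ a ∈ s, a < b ∧ ∃ c ∈ s, b < c}

variable {s : Set β} {a b c d x : β}

theorem ButterflyFree.not_lt_lt_lt (hs : ButterflyFree s) (ha : a ∈ s) (hb : b ∈ s) (hc : c ∈ s)
    (hd : d ∈ s) (hab : a < b) (hbc : b < c) (hcd : c < d) : False :=
  hs a ha b hb c hc d hd hab.ne (hab.trans hbc).ne (hab.trans (hbc.trans hcd)).ne hbc.ne
    (hbc.trans hcd).ne hcd.ne (hab.trans hbc).le (hab.trans (hbc.trans hcd)).le hbc.le
    (hbc.trans hcd).le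

theorem ButterflyFree.eq_left_of_lt_middle (hs : ButterflyFree s) (ha : a ∈ s) (hb : b ∈ s)
    (hc : c ∈ s) (hx : x ∈ s) (hab : a < b) (hbc : b < c) (hxb : x < b) : x = a := by
  by_contra hxa
  exact hs x hx a ha b hb c hc hxa hxb.ne (hxb.trans hbc).ne hab.ne (hab.trans hbc).ne hbc.ne
    hxb.le (hxb.trans hbc).le hab.le (hab.trans hbc).le

theorem ButterflyFree.eq_right_of_middle_lt (hs : ButterflyFree s) (ha : a ∈ s) (hb : b ∈ s)
    (hc : c ∈ s) (hx : x ∈ s) (hab : a < b) (hbc : b < c) (hbx : b < x) : x = c := by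
  by_contra hxc
  exact hs a ha b hb x hx c hc hab.ne (hab.trans hbx).ne (hab.trans hbc).ne hbx.ne hbc.ne hxc
    (hab.trans hbx).le (hab.trans hbc).le hbx.le hbc.le

theorem ButterflyFree.eq_of_le_of_mem_middles [DecidableLT β] {t : Finset β}
    (ht : ButterflyFree (t : Set β)) {b b' : β} (hb : b ∈ t.middles) (hb' : b' ∈ t.middles)
    (h : b ≤ b') : b = b' := by
  obtain ⟨hbt, a, ha, hab, -⟩ := mem_filter.1 hb
  obtain ⟨hb't, -, -, -, c, hc, hb'c⟩ := mem_filter.1 hb'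
  by_contra hne
  exact ht.not_lt_lt_lt ha hbt hb't hc hab (h.lt_of_ne hne) hb'c

end PartialOrder

section PermCount

variable {α : Type*} [Fintype α] [DecidableEq α]

theorem card_perm_comp_eq_of_card_fiber_eq {β : Type*} [Fintype β] [DecidableEq β] {f g : α → β}
    (h : ∀ b, #{a | f a = b} = #{a | g a = b}) :
    #{σ : Perm α | g ∘ σ = f} = ∏ b, (#{a | f a = b})! := by
  -- `σ₀` matches the fibres of `f` with those of `g`; `σ ↦ σ₀⁻¹ * σ` then identifies the
  -- permutations in question with the stabiliser of `f`.
  let σ₀ : Perm α := ofFiberEquiv (f := f) (g := g) fun b => Fintype.equivOfCardEq <| by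
    simpa only [Fintype.card_subtype] using h b
  have hσ₀ : g ∘ σ₀ = f := funext (ofFiberEquiv_map _)
  have : #{σ : Perm α | g ∘ σ = f} = #{τ : Perm α | f ∘ τ = f} := by
    refine card_nbij' (σ₀⁻¹ * ·) (σ₀ * ·) ?_ ?_ (fun σ _ => by simp) (fun σ _ => by simp)
    · intro σ hσ
      simp only [coe_filter, mem_univ, true_and, Set.mem_ofPred_eq] at hσ ⊢
      funext x
      rw [← congrFun hσ x, ← hσ₀]
      simp
    · intro τ hτ
      simp only [coe_filter, mem_univ, true_and, Set.mem_ofPred_eq] at hτ ⊢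
      rw [Perm.coe_mul, ← Function.comp_assoc, hσ₀, hτ]
  rw [this, ← Fintype.card_subtype, DomMulAct.stabilizer_card]
  simp only [Fintype.card_subtype]

theorem card_filter_decide_mem_eq {A B : Finset α} (hAB : A ⊆ B) (p q : Bool) :
    #{x | (decide (x ∈ A), decide (x ∈ B)) = (p, q)} =
      bif p then (bif q then #A else 0) else (bif q then #B - #A else Fintype.card α - #B) := by
  cases p <;> cases q <;> simp only [Prod.mk.injEq, decide_eq_true_eq, decide_eq_false_iff_not,
    cond_true, cond_false]
  · rw [← card_compl]
    congr 1; ext x; simpa using fun hxB hxA => hxB (hAB hxA)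
  · rw [← card_sdiff_of_subset hAB]
    congr 1; ext x; simp [and_comm]
  · simpa using fun x hx => hAB hx
  · congr 1; ext x; simpa using fun hx => hAB hx

theorem card_perm_mapsTo_flag {A B A' B' : Finset α} (hAB : A ⊆ B) (hAB' : A' ⊆ B')
    (hA : #A' = #A) (hB : #B' = #B) :
    #{σ : Perm α | ∀ x, (σ x ∈ A ↔ x ∈ A') ∧ (σ x ∈ B ↔ x ∈ B')} =
      (#A)! * (#B - #A)! * (Fintype.card α - #B)! := by
  have hcolour : ∀ σ : Perm α, (∀ x, (σ x ∈ A ↔ x ∈ A') ∧ (σ x ∈ B ↔ x ∈ B')) ↔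
      (fun x => (decide (x ∈ A), decide (x ∈ B))) ∘ σ =
        fun x => (decide (x ∈ A'), decide (x ∈ B')) := by
    simp [funext_iff]
  simp_rw [hcolour]
  rw [card_perm_comp_eq_of_card_fiber_eq]
  · simp [Fintype.prod_prod_type, card_filter_decide_mem_eq hAB', hA, hB, mul_assoc]
  · rintro ⟨p, q⟩
    rw [card_filter_decide_mem_eq hAB, card_filter_decide_mem_eq hAB', hA, hB]

end PermCount

section Chains

variable {n : ℕ}

/-- `σ` encodes the maximal chain `∅ ⊂ {σ 0} ⊂ {σ 0, σ 1} ⊂ ⋯ ⊂ univ`, and `S` lies on it. -/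
def IsInitialSegment (σ : Perm (Fin n)) (S : Finset (Fin n)) : Prop :=
  ∀ i, σ i ∈ S ↔ (i : ℕ) < #S

instance : DecidableRel (IsInitialSegment (n := n)) := fun _ _ => by
  unfold IsInitialSegment; infer_instance

theorem IsInitialSegment.subset_of_card_le {σ : Perm (Fin n)} {S T : Finset (Fin n)}
    (hS : IsInitialSegment σ S) (hT : IsInitialSegment σ T) (h : #S ≤ #T) : S ⊆ T := by
  intro x hx
  rw [← σ.apply_symm_apply x] at hx ⊢
  exact (hT _).2 (((hS _).1 hx).trans_le h)

theorem isChain_setOf_isInitialSegment (σ : Perm (Fin n)) :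
    IsChain (· ≤ ·) {S | IsInitialSegment σ S} := fun S hS T hT _ =>
  (le_total #S #T).imp (hS.subset_of_card_le hT) (hT.subset_of_card_le hS)

def chainsThrough (S : Finset (Fin n)) : Finset (Perm (Fin n)) := {σ | IsInitialSegment σ S}

@[simp]
theorem mem_chainsThrough {σ : Perm (Fin n)} {S : Finset (Fin n)} :
    σ ∈ chainsThrough S ↔ IsInitialSegment σ S := by
  simp [chainsThrough]

theorem card_chainsThrough_inter {A B : Finset (Fin n)} (hAB : A ⊆ B) :
    #(chainsThrough A ∩ chainsThrough B) = (#A)! * (#B - #A)! * (n - #B)! := by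
  have hB : #B ≤ n := by simpa using card_le_univ B
  have hA : #A ≤ n := (card_le_card hAB).trans hB
  have hflag := card_perm_mapsTo_flag hAB (A' := {i : Fin n | i < #A})
    (B' := {i : Fin n | i < #B})
    (fun i hi => by
      simp only [mem_filter, mem_univ, true_and] at hi ⊢
      exact hi.trans_le (card_le_card hAB))
    (by simp [Fin.card_filter_val_lt, hA]) (by simp [Fin.card_filter_val_lt, hB])
  rw [Fintype.card_fin] at hflag
  rw [← hflag]
  congr 1
  ext σ
  simp [IsInitialSegment, forall_and]

theorem card_chainsThrough (S : Finset (Fin n)) :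
    #(chainsThrough S) = (#S)! * (n - #S)! := by
  simpa using card_chainsThrough_inter (subset_refl S)

theorem two_mul_card_chainsThrough_inter_le_left {A B : Finset (Fin n)} (hA : A.Nonempty)
    (hAB : A ⊂ B) : 2 * #(chainsThrough A ∩ chainsThrough B) ≤ #(chainsThrough B) := by
  have h := Nat.choose_mul_factorial_mul_factorial (card_le_card hAB.subset)
  have h2 := Nat.two_le_choose hA.card_pos (card_lt_card hAB)
  rw [card_chainsThrough_inter hAB.subset, card_chainsThrough, ← h]
  calc 2 * ((#A)! * (#B - #A)! * (n - #B)!)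
      ≤ (#B).choose #A * ((#A)! * (#B - #A)! * (n - #B)!) := by gcongr
    _ = _ := by ring

theorem two_mul_card_chainsThrough_inter_le_right {B D : Finset (Fin n)} (hBD : B ⊂ D)
    (hD : D ≠ univ) : 2 * #(chainsThrough B ∩ chainsThrough D) ≤ #(chainsThrough B) := by
  have hDn : #D < n := by simpa using card_lt_card (ssubset_univ_iff.2 hD)
  have hBD' := card_lt_card hBD
  have h := Nat.choose_mul_factorial_mul_factorial (show #D - #B ≤ n - #B by omega)
  have h2 := Nat.two_le_choose (show 0 < #D - #B by omega) (show #D - #B < n - #B by omega)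
  rw [show n - #B - (#D - #B) = n - #D by omega] at h
  rw [card_chainsThrough_inter hBD.subset, card_chainsThrough, ← h]
  calc 2 * ((#B)! * (#D - #B)! * (n - #D)!)
      ≤ (n - #B).choose (#D - #B) * ((#B)! * (#D - #B)! * (n - #D)!) := by gcongr
    _ = _ := by ring

variable {F : Finset (Finset (Fin n))}

theorem ButterflyFree.pairwiseDisjoint_chainsThrough_middles
    (hF : ButterflyFree (F : Set (Finset (Fin n)))) :
    (F.middles : Set (Finset (Fin n))).PairwiseDisjoint chainsThrough := by
  intro B hB B' hB' hne
  rw [Function.onFun, disjoint_left]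
  intro σ hσ hσ'
  rcases (isChain_setOf_isInitialSegment σ).total (mem_chainsThrough.1 hσ)
    (mem_chainsThrough.1 hσ') with h | h
  · exact hne (hF.eq_of_le_of_mem_middles hB hB' h)
  · exact hne (hF.eq_of_le_of_mem_middles hB' hB h).symm

theorem ButterflyFree.sum_card_filter_isInitialSegment_le
    (hF : ButterflyFree (F : Set (Finset (Fin n)))) {A B D : Finset (Fin n)} (hA : A ∈ F)
    (hB : B ∈ F) (hD : D ∈ F) (hAB : A < B) (hBD : B < D) (hA₀ : A.Nonempty) (hD₀ : D ≠ univ) :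
    ∑ σ ∈ chainsThrough B, #{S ∈ F | IsInitialSegment σ S} ≤ 2 * #(chainsThrough B) := by
  have hsub : ∀ σ ∈ chainsThrough B,
      {S ∈ F | IsInitialSegment σ S} ⊆ {S ∈ ({A, B, D} : Finset _) | IsInitialSegment σ S} := by
    intro σ hσ S hS
    rw [mem_filter] at hS ⊢
    refine ⟨?_, hS.2⟩
    rcases (isChain_setOf_isInitialSegment σ).total hS.2 (mem_chainsThrough.1 hσ) with h | h
    · rcases h.lt_or_eq with h | rfl
      · simp [hF.eq_left_of_lt_middle hA hB hD hS.1 hAB hBD h]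
      · simp
    · rcases h.lt_or_eq with h | rfl
      · simp [hF.eq_right_of_middle_lt hA hB hD hS.1 hAB hBD h]
      · simp
  calc ∑ σ ∈ chainsThrough B, #{S ∈ F | IsInitialSegment σ S}
      ≤ ∑ σ ∈ chainsThrough B, #{S ∈ ({A, B, D} : Finset _) | IsInitialSegment σ S} :=
        sum_le_sum fun σ hσ => card_le_card (hsub σ hσ)
    _ = ∑ S ∈ ({A, B, D} : Finset _), #{σ ∈ chainsThrough B | IsInitialSegment σ S} :=
        sum_card_bipartiteAbove_eq_sum_card_bipartiteBelow _
    _ = #(chainsThrough A ∩ chainsThrough B) + #(chainsThrough B)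
          + #(chainsThrough B ∩ chainsThrough D) := by
        rw [sum_insert (by simp [hAB.ne, (hAB.trans hBD).ne]), sum_insert (by simp [hBD.ne]),
          sum_singleton]
        simp only [← mem_chainsThrough, filter_mem_eq_inter, inter_self,
          inter_comm _ (chainsThrough A), add_assoc]
    _ ≤ 2 * #(chainsThrough B) := by
        have := two_mul_card_chainsThrough_inter_le_left hA₀ hAB
        have := two_mul_card_chainsThrough_inter_le_right hBD hD₀
        omega

theorem ButterflyFree.sum_card_chainsThrough_le (hF : ButterflyFree (F : Set (Finset (Fin n))))
    (hempty : ∅ ∉ F) (hfull : univ ∉ F) : ∑ S ∈ F, #(chainsThrough S) ≤ 2 * n ! := by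
  calc ∑ S ∈ F, #(chainsThrough S) = ∑ σ, #{S ∈ F | IsInitialSegment σ S} :=
        (sum_card_bipartiteAbove_eq_sum_card_bipartiteBelow _).symm
    _ ≤ 2 * #(univ : Finset (Perm (Fin n))) := by
        refine sum_le_mul_card_of_pairwiseDisjoint (fun _ _ => subset_univ _)
          hF.pairwiseDisjoint_chainsThrough_middles (fun B hB => ?_) fun σ _ hσ => ?_
        · obtain ⟨hBF, A, hA, hAB, D, hD, hBD⟩ := mem_filter.1 hB
          exact hF.sum_card_filter_isInitialSegment_le hA hBF hD hAB hBD
            (nonempty_iff_ne_empty.2 fun h => hempty (h ▸ hA)) fun h => hfull (h ▸ hD)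
        · by_contra! h
          obtain ⟨A, hA, B, hB, D, hD, hAB, hBD⟩ :=
            ((isChain_setOf_isInitialSegment σ).mono fun S hS => (mem_filter.1 hS).2)
              |>.exists_lt_lt_of_two_lt_card h
          rw [mem_filter] at hA hB hD
          exact hσ B (mem_filter.2 ⟨hB.1, A, hA.1, hAB, D, hD.1, hBD⟩) (mem_chainsThrough.2 hB.2)
    _ = 2 * n ! := by rw [card_univ, Fintype.card_perm, Fintype.card_fin]

end Chains

theorem stmt_15 (n : ℕ) (hn : 3 ≤ n) (F : Finset (Finset (Fin n)))
    (hempty : ∅ ∉ F) (hfull : (Finset.univ : Finset (Fin n)) ∉ F)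
    (hstar : ∀ A ∈ F, ∀ B ∈ F, ∀ C ∈ F, ∀ D ∈ F,
      A ≠ B → A ≠ C → A ≠ D → B ≠ C → B ≠ D → C ≠ D → ¬ (A ∪ B ⊆ C ∩ D)) :
    ∑ S ∈ F, S.card.factorial * (n - S.card).factorial
      ≤ 2 * n * (n - 1).factorial := by
  have hF : ButterflyFree (F : Set (Finset (Fin n))) :=
    fun A hA B hB C hC D hD hAB hAC hAD hBC hBD hCD hAC' hAD' hBC' hBD' =>
      hstar A hA B hB C hC D hD hAB hAC hAD hBC hBD hCD
        (union_subset (subset_inter hAC' hAD') (subset_inter hBC' hBD'))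
  calc ∑ S ∈ F, S.card.factorial * (n - S.card).factorial = ∑ S ∈ F, #(chainsThrough S) := by
        simp only [card_chainsThrough]
    _ ≤ 2 * n ! := hF.sum_card_chainsThrough_le hempty hfull
    _ = 2 * n * (n - 1)! := by rw [mul_assoc, Nat.mul_factorial_pred (by omega)]
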